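/- arXiv:1712.09443 — 2 statements merged into one kernel-verified Lean document; each statement's English description precedes it below -/
import Mathlib

section
/- Let v_{t} ∈ {0,1} for t = 1, …, T satisfy ∑_{t=1}^T (1 − v_t) = T^M and the duration-coupling constraint v_{t−1} − v_t + v_{t'} ≤ 1 for all t and all t' with 1 ≤ t' − (t−1) ≤ T^M (with v_0 = 1). Then the set {t : v_t = 0} is a contiguous block of exactly T^M consecutive periods. -/
/-- Maintenance-window constraints force a single contiguous outage block of
exactly `TM` consecutive periods. `v t = 0` means under maintenance at `t`,
with boundary convention `v 0 = 1`. -/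
theorem stmt_7 (T TM : ℕ) (v : ℕ → ℝ)
    (hTM : 1 ≤ TM) (hTMT : TM ≤ T)
    (hbin : ∀ t, v t = 0 ∨ v t = 1)
    (hv0 : v 0 = 1)
    (hsum : ∑ t ∈ Finset.Icc 1 T, (1 - v t) = (TM : ℝ))
    (hdur : ∀ t ∈ Finset.Icc 1 T, ∀ t' ∈ Finset.Icc 1 T,
      1 ≤ t' - (t - 1) → t' - (t - 1) ≤ TM → v (t - 1) - v t + v t' ≤ 1) :
    ∃ s : ℕ, 1 ≤ s ∧ s + TM - 1 ≤ T ∧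
      ∀ t ∈ Finset.Icc 1 T, (v t = 0 ↔ s ≤ t ∧ t ≤ s + TM - 1) := by
  classical
  set Z : Finset ℕ := (Finset.Icc 1 T).filter (fun t => v t = 0) with hZ
  have hcard : Z.card = TM := by
    have h1 : ∑ t ∈ Finset.Icc 1 T, (1 - v t)
        = ∑ t ∈ Finset.Icc 1 T, (if v t = 0 then (1:ℝ) else 0) := by
      refine Finset.sum_congr rfl fun t _ => ?_
      rcases hbin t with h | h <;> simp [h]
    rw [h1, Finset.sum_boole] at hsum
    exact_mod_cast hsum
  have hZne : Z.Nonempty := by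
    rw [← Finset.card_pos, hcard]; omega
  set s := Z.min' hZne with hs
  have hsZ : s ∈ Z := Z.min'_mem hZne
  have hsIcc : s ∈ Finset.Icc 1 T := (Finset.mem_filter.mp hsZ).1
  have hvs : v s = 0 := (Finset.mem_filter.mp hsZ).2
  obtain ⟨hs1, hsT⟩ := Finset.mem_Icc.mp hsIcc
  have hmin : ∀ t ∈ Z, s ≤ t := fun t ht => Z.min'_le t ht
  have hvs1 : v (s - 1) = 1 := by
    rcases Nat.eq_or_lt_of_le hs1 with h | h
    · rw [← h]; simpa using hv0
    · rcases hbin (s-1) with h0 | h1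
      · exfalso
        have hmem : s - 1 ∈ Z :=
          Finset.mem_filter.mpr ⟨Finset.mem_Icc.mpr ⟨by omega, by omega⟩, h0⟩
        have := hmin _ hmem; omega
      · exact h1
  have hblock : ∀ t', s ≤ t' → t' ≤ s + TM - 1 → t' ≤ T → v t' = 0 := by
    intro t' h1' h2' h3'
    have hd := hdur s hsIcc t' (Finset.mem_Icc.mpr ⟨by omega, h3'⟩)
      (by omega) (by omega)
    rw [hvs1, hvs] at hd
    rcases hbin t' with h | h
    · exact h
    · rw [h] at hd; linarith
  have hsub : Z ⊆ Finset.Icc s T := by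
    intro t ht
    have h1 := hmin t ht
    have h2 := (Finset.mem_Icc.mp (Finset.mem_filter.mp ht).1).2
    exact Finset.mem_Icc.mpr ⟨h1, h2⟩
  have hcard2 : TM ≤ T + 1 - s := by
    have := Finset.card_le_card hsub
    rwa [hcard, Nat.card_Icc] at this
  have hsTM : s + TM - 1 ≤ T := by omega
  have hsup : Finset.Icc s (s + TM - 1) ⊆ Z := by
    intro t ht
    obtain ⟨h1', h2'⟩ := Finset.mem_Icc.mp ht
    exact Finset.mem_filter.mpr ⟨Finset.mem_Icc.mpr ⟨by omega, by omega⟩,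
      hblock t h1' h2' (by omega)⟩
  have hZeq : Z = Finset.Icc s (s + TM - 1) := by
    refine (Finset.eq_of_subset_of_card_le hsup ?_).symm
    rw [hcard, Nat.card_Icc]; omega
  refine ⟨s, hs1, hsTM, ?_⟩
  intro t ht
  constructor
  · intro hv
    have hmem : t ∈ Z := Finset.mem_filter.mpr ⟨ht, hv⟩
    rw [hZeq] at hmem
    exact Finset.mem_Icc.mp hmem
  · rintro ⟨h1', h2'⟩
    have hmem : t ∈ Z := hZeq ▸ Finset.mem_Icc.mpr ⟨h1', h2'⟩
    exact (Finset.mem_filter.mp hmem).2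
end

section
/- Ramp constraint implication at shutdown: under the same constraints as the startup case, if v_{t−1} = 1 and v_t = 0, then P_{t−1} = P̲ and P_t = 0. -/
/-- Shutdown: a generator is dispatched to its minimum output in the period
before it is shut down, and produces zero when offline. -/
theorem stmt_14 (vprev vcur Pl Pu Rup Rdn Pprev Pcur : ℝ)
    (hvp : vprev = 0 ∨ vprev = 1) (hvc : vcur = 0 ∨ vcur = 1)
    (hPl : 0 ≤ Pl) (hRup : 0 ≤ Rup) (hRdn : 0 ≤ Rdn)
    (hcap1 : Pl * vcur ≤ Pcur) (hcap2 : Pcur ≤ Pu * vcur)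
    (hcap3 : Pl * vprev ≤ Pprev) (hcap4 : Pprev ≤ Pu * vprev)
    (hru : Pcur - Pprev ≤ (2 - vprev - vcur) * Pl + (1 + vprev - vcur) * Rup)
    (hrd : Pprev - Pcur ≤ (2 - vprev - vcur) * Pl + (1 - vprev + vcur) * Rdn)
    (h1 : vprev = 1) (h0 : vcur = 0) :
    Pprev = Pl ∧ Pcur = 0 := by
  subst h1 h0
  norm_num at *
  constructor
  · linarith
  · linarith
end
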